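/- arXiv:math/0509507 — 9 statements merged into one kernel-verified Lean document; each statement's English description precedes it below -/
import Mathlib

section
/- Let j ∈ ℂ be a primitive cube root of unity, A an associative unital ℂ-algebra, and θ : Fin N → A a family satisfying the ternary relations. Then every product of exactly four generators vanishes: for all indices a, b, c, d one has θ a * θ b * θ c * θ d = 0. -/
/-- If `j` is a primitive cube root of unity, `A` an associative unital
`ℂ`-algebra and `θ : Fin N → A` satisfies the ternary relations
`θ a * θ b * θ c = j • (θ b * θ c * θ a)`, then every product of exactly four
generators vanishes. -/
theorem ternary_relations_four_product_eq_zero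
    {N : ℕ} (j : ℂ) (hj : j ^ 3 = 1) (hj1 : j ≠ 1)
    {A : Type*} [Ring A] [Algebra ℂ A] (θ : Fin N → A)
    (hθ : ∀ a b c : Fin N, θ a * θ b * θ c = j • (θ b * θ c * θ a)) :
    ∀ a b c d : Fin N, θ a * θ b * θ c * θ d = 0 := by
  have hj0 : j ≠ 0 := by
    intro h; rw [h] at hj; norm_num at hj
  intro a b c d
  set Y := θ c * θ a * θ b * θ d with hY
  have h1 : θ a * θ b * θ c * θ d = (j * j) • Y := by
    rw [hθ a b c, hθ b c a, smul_smul, smul_mul_assoc]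
  have h2 : θ a * θ b * θ c * θ d = (j * j * j) • Y := by
    calc θ a * θ b * θ c * θ d = θ a * (θ b * θ c * θ d) := by
          rw [mul_assoc, mul_assoc, mul_assoc]
      _ = j • (θ a * (θ c * θ d * θ b)) := by rw [hθ b c d, mul_smul_comm]
      _ = j • (θ a * θ c * θ d * θ b) := by rw [mul_assoc, mul_assoc, mul_assoc]
      _ = (j * j) • (θ c * θ d * θ a * θ b) := by
          rw [hθ a c d, smul_mul_assoc, smul_smul]
      _ = (j * j) • (θ c * (θ d * θ a * θ b)) := by
          rw [mul_assoc, mul_assoc, mul_assoc]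
      _ = (j * j * j) • (θ c * (θ a * θ b * θ d)) := by
          rw [hθ d a b, mul_smul_comm, smul_smul]
      _ = (j * j * j) • Y := by simp only [hY, mul_assoc]
  have hc : (j * j - j * j * j) ≠ 0 := by
    have : j * j - j * j * j = j * j * (1 - j) := by ring
    rw [this]
    exact mul_ne_zero (mul_ne_zero hj0 hj0) (sub_ne_zero.mpr (Ne.symm hj1))
  have hzero : (j * j - j * j * j) • Y = 0 := by
    rw [sub_smul, ← h1, ← h2, sub_self]
  have hYzero : Y = 0 := by
    have := congrArg (fun x => (j * j - j * j * j)⁻¹ • x) hzero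
    simpa [smul_smul, inv_mul_cancel₀ hc] using this
  rw [h1, hYzero, smul_zero]
end

section
/- Let j ∈ ℂ be a primitive cube root of unity, A an associative unital ℂ-algebra, and θ : Fin N → A a family satisfying the ternary relations. Then any product of four or more generators vanishes: for every list l of indices in Fin N with l.length ≥ 4, the product (l.map θ).prod equals 0. -/
/-- If `j` is a primitive cube root of unity, `A` an associative unital
`ℂ`-algebra and `θ : Fin N → A` satisfies the ternary relations, then any product of
four or more generators vanishes. -/
theorem ternary_relations_long_product_eq_zero
    {N : ℕ} (j : ℂ) (hj : j ^ 3 = 1) (hj1 : j ≠ 1)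
    {A : Type*} [Ring A] [Algebra ℂ A] (θ : Fin N → A)
    (hθ : ∀ a b c : Fin N, θ a * θ b * θ c = j • (θ b * θ c * θ a)) :
    ∀ l : List (Fin N), 4 ≤ l.length → (l.map θ).prod = 0 := by
  have key : ∀ a b c d : Fin N, θ a * θ b * θ c * θ d = j • (θ b * θ c * θ a * θ d) := by
    intro a b c d
    rw [hθ a b c, smul_mul_assoc]
  have key2 : ∀ a b c d : Fin N, θ a * θ b * θ c * θ d = j • (θ a * θ c * θ d * θ b) := by
    intro a b c d
    calc θ a * θ b * θ c * θ d = θ a * (θ b * θ c * θ d) := by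
          simp only [mul_assoc]
      _ = θ a * (j • (θ c * θ d * θ b)) := by rw [hθ b c d]
      _ = j • (θ a * θ c * θ d * θ b) := by
          rw [mul_smul_comm]; simp only [mul_assoc]
  have hq : ∀ a b c d : Fin N, θ a * θ b * θ c * θ d = 0 := by
    intro a b c d
    have hjj : j * j * j * j = j := by
      have h4 : j * j * j * j = j ^ 3 * j := by ring
      rw [h4, hj, one_mul]
    have e : θ a * θ b * θ c * θ d = j • (θ a * θ b * θ c * θ d) := by
      calc θ a * θ b * θ c * θ d = j • (θ b * θ c * θ a * θ d) := key a b c d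
        _ = j • (j • (θ b * θ a * θ d * θ c)) := by rw [key2 b c a d]
        _ = j • (j • (j • (θ a * θ d * θ b * θ c))) := by rw [key b a d c]
        _ = j • (j • (j • (j • (θ a * θ b * θ c * θ d)))) := by rw [key2 a d b c]
        _ = j • (θ a * θ b * θ c * θ d) := by
            rw [smul_smul, smul_smul, smul_smul, hjj]
    have h0 : (1 - j) • (θ a * θ b * θ c * θ d) = 0 := by
      rw [sub_smul, one_smul, ← e, sub_self]
    have hne : (1 - j) ≠ 0 := sub_ne_zero.mpr (Ne.symm hj1)
    rcases smul_eq_zero.mp h0 with h | h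
    · exact absurd h hne
    · exact h
  intro l hl
  match l with
  | a :: b :: c :: d :: t =>
    have : ((a :: b :: c :: d :: t).map θ).prod
        = (θ a * θ b * θ c * θ d) * (t.map θ).prod := by
      simp [List.prod_cons, mul_assoc]
    rw [this, hq, zero_mul]
end

section
/- The ternary Grassmann algebra G_N on N generators is a finite-dimensional ℂ-vector space of dimension N(N+1)(N+2)/3 + 1. -/
/-!
Rotating a cubic monomial costs a factor `j`. Hence `θ a ^ 3 = 0`, every quartic monomial
vanishes (`θ_abcd = j ^ 2 θ_badc = j ^ 4 θ_abcd = j θ_abcd`), and every cubic monomial is a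
multiple of `θ_t` with `t` the lexicographically least triple of its non-trivial rotation orbit.
So `1`, `θ a`, `θ a θ b` and these `θ_t` span. They are independent because `G_N` acts on the
vector space with that basis (`θ a` prepends `a`, cubic words being reduced to orbit minima with
the matching power of `j`), sending `1` to the corresponding basis vectors. Counting orbits, the
dimension is `1 + N + N ^ 2 + (N ^ 3 - N) / 3`.
-/

/-- The ternary commutation relations on the free `ℂ`-algebra on `N` generators:
`X a * X b * X c` is related to `j • (X b * X c * X a)`. The quotient ring
`RingQuot (ternaryRel j N)` is precisely the quotient of the free algebra by the
two-sided ideal generated by the elements `X a * X b * X c − j • (X b * X c * X a)`,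
i.e. the ternary Grassmann algebra `G_N`. -/
inductive ternaryRel (j : ℂ) (N : ℕ) :
    FreeAlgebra ℂ (Fin N) → FreeAlgebra ℂ (Fin N) → Prop
  | rel (a b c : Fin N) : ternaryRel j N
      (FreeAlgebra.ι ℂ a * FreeAlgebra.ι ℂ b * FreeAlgebra.ι ℂ c)
      (j • (FreeAlgebra.ι ℂ b * FreeAlgebra.ι ℂ c * FreeAlgebra.ι ℂ a))

section PeriodThree

variable {α : Type*} {f : α → α} (hf : ∀ x, f (f (f x)) = x)
include hf

lemma apply_apply_ne_self {x : α} (hx : f x ≠ x) : f (f x) ≠ x :=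
  fun h => hx (by simpa [h] using hf x)

lemma apply_apply_ne_apply {x : α} (hx : f x ≠ x) : f (f x) ≠ f x :=
  fun h => hx (by simpa [h] using hf x)

end PeriodThree

section OrbitMin

variable {α β : Type*} [LinearOrder β] (κ : α → β) (f : α → α)

def IsOrbitMin (x : α) : Prop := κ x < κ (f x) ∧ κ x < κ (f (f x))

instance : DecidablePred (IsOrbitMin κ f) := fun _ => instDecidableAnd

variable {κ f} (hf : ∀ x, f (f (f x)) = x)
include hf

lemma IsOrbitMin.not_apply {x : α} (h : IsOrbitMin κ f x) : ¬ IsOrbitMin κ f (f x) := by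
  simp only [IsOrbitMin, hf] at h ⊢
  order

lemma IsOrbitMin.not_apply_apply {x : α} (h : IsOrbitMin κ f x) :
    ¬ IsOrbitMin κ f (f (f x)) := by
  simp only [IsOrbitMin, hf] at h ⊢
  order

lemma isOrbitMin_or (hκ : Function.Injective κ) {x : α} (hx : f x ≠ x) :
    IsOrbitMin κ f x ∨ IsOrbitMin κ f (f x) ∨ IsOrbitMin κ f (f (f x)) := by
  have := hκ.ne hx
  have := hκ.ne (apply_apply_ne_self hf hx)
  have := hκ.ne (apply_apply_ne_apply hf hx)
  simp only [IsOrbitMin, hf]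
  grind

/-- A point that is not fixed is exactly one of `x`, `f x`, `f (f x)` for an orbit minimum `x`. -/
lemma card_fixed_add_three_mul_card_isOrbitMin (hκ : Function.Injective κ) [Fintype α]
    [DecidablePred fun x => f x = x] :
    Fintype.card {x // f x = x} + 3 * Fintype.card {x // IsOrbitMin κ f x} =
      Fintype.card α := by
  let e : α ≃ α := ⟨f, f ∘ f, hf, hf⟩
  let χ (p : Prop) [Decidable p] : ℕ := if p then 1 else 0
  have partition (x : α) : χ (f x = x) + χ (IsOrbitMin κ f x) + χ (IsOrbitMin κ f (f x)) +
      χ (IsOrbitMin κ f (f (f x))) = 1 := by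
    by_cases hx : f x = x
    · simp [χ, IsOrbitMin, hx]
    have := hκ.ne hx
    have := hκ.ne (apply_apply_ne_self hf hx)
    have := hκ.ne (apply_apply_ne_apply hf hx)
    simp only [χ, IsOrbitMin, hf, hx]
    grind
  have shift₁ : ∑ x, χ (IsOrbitMin κ f (f x)) = ∑ x, χ (IsOrbitMin κ f x) :=
    e.sum_comp fun x => χ (IsOrbitMin κ f x)
  have shift₂ : ∑ x, χ (IsOrbitMin κ f (f (f x))) = ∑ x, χ (IsOrbitMin κ f x) :=
    (e.trans e).sum_comp fun x => χ (IsOrbitMin κ f x)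
  rw [Fintype.card_subtype, Fintype.card_subtype, Finset.card_filter, Finset.card_filter,
    Fintype.card_eq_sum_ones]
  calc
    _ = ∑ x, (χ (f x = x) + χ (IsOrbitMin κ f x) + χ (IsOrbitMin κ f (f x)) +
        χ (IsOrbitMin κ f (f (f x)))) := by
      simp only [Finset.sum_add_distrib, shift₁, shift₂]
      ring
    _ = ∑ x : α, 1 := Finset.sum_congr rfl fun x _ => partition x

end OrbitMin

namespace TernaryGrassmann

variable {N : ℕ}

abbrev Triple (N : ℕ) := Fin N × Fin N × Fin N

def rot : Triple N → Triple N
  | (a, b, c) => (b, c, a)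

lemma rot_rot_rot (t : Triple N) : rot (rot (rot t)) = t := rfl

def lexKey (t : Triple N) : Fin N ×ₗ Fin N ×ₗ Fin N := toLex (t.1, toLex t.2)

lemma lexKey_injective : Function.Injective (lexKey (N := N)) := by
  intro s t h
  simpa [lexKey, Prod.ext_iff] using h

abbrev CyclicRep (N : ℕ) := {t : Triple N // IsOrbitMin lexKey rot t}

def fixedRotEquiv : {t : Triple N // rot t = t} ≃ Fin N where
  toFun t := t.1.1
  invFun a := ⟨(a, a, a), rfl⟩
  left_inv := by
    rintro ⟨⟨a, b, c⟩, h⟩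
    obtain ⟨rfl, rfl, -⟩ : b = a ∧ c = b ∧ a = c := by simpa [rot] using h
    rfl
  right_inv _ := rfl

lemma add_three_mul_card_cyclicRep : N + 3 * Fintype.card (CyclicRep N) = N * (N * N) := by
  have := card_fixed_add_three_mul_card_isOrbitMin (rot_rot_rot (N := N)) lexKey_injective
  simpa [Fintype.card_congr fixedRotEquiv] using this

end TernaryGrassmann

section TernaryRelation

variable {K A ι : Type*} [Field K] [Ring A] [Algebra K A] {j : K} {x : ι → A}

lemma eq_zero_of_eq_smul_self {M : Type*} [AddCommGroup M] [Module K M] (hj1 : j ≠ 1) {v : M}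
    (h : v = j • v) : v = 0 := by
  have : (j - 1) • v = 0 := by rw [sub_smul, one_smul, ← h, sub_self]
  exact (smul_eq_zero.mp this).resolve_left (sub_ne_zero.mpr hj1)

variable (hx : ∀ a b c, x a * x b * x c = j • (x b * x c * x a))
include hx

lemma cube_eq_zero_of_ternary (hj1 : j ≠ 1) (a : ι) : x a * x a * x a = 0 :=
  eq_zero_of_eq_smul_self hj1 (hx a a a)

lemma mul_mul_mul_eq_zero_of_ternary (hj : j ^ 3 = 1) (hj1 : j ≠ 1) (a b c d : ι) :
    x a * x b * x c * x d = 0 := by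
  have swap (a b c d : ι) : x a * x b * x c * x d = (j * j) • (x b * x a * x d * x c) := by
    calc x a * x b * x c * x d = j • (x b * (x c * x a * x d)) := by
          rw [hx a b c, smul_mul_assoc]; simp only [mul_assoc]
      _ = (j * j) • (x b * x a * x d * x c) := by
          rw [hx c a d, mul_smul_comm, smul_smul]; simp only [mul_assoc]
  have hj4 : j * j * (j * j) = j := by linear_combination j * hj
  refine eq_zero_of_eq_smul_self hj1 ?_
  calc x a * x b * x c * x d = (j * j) • (j * j) • (x a * x b * x c * x d) := by
        rw [← swap, ← swap]
    _ = j • (x a * x b * x c * x d) := by rw [smul_smul, hj4]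

end TernaryRelation

namespace TernaryGrassmann

variable {N : ℕ} {j : ℂ}

def gen (j : ℂ) (a : Fin N) : RingQuot (ternaryRel j N) :=
  RingQuot.mkAlgHom ℂ (ternaryRel j N) (FreeAlgebra.ι ℂ a)

lemma gen_mul_gen_mul_gen (a b c : Fin N) :
    gen j a * gen j b * gen j c = j • (gen j b * gen j c * gen j a) := by
  simpa only [gen, map_mul, map_smul] using
    RingQuot.mkAlgHom_rel ℂ (ternaryRel.rel (j := j) a b c)

def lift {A : Type*} [Semiring A] [Algebra ℂ A] (x : Fin N → A)
    (hx : ∀ a b c, x a * x b * x c = j • (x b * x c * x a)) :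
    RingQuot (ternaryRel j N) →ₐ[ℂ] A :=
  RingQuot.liftAlgHom ℂ ⟨FreeAlgebra.lift ℂ x, by
    rintro _ _ ⟨a, b, c⟩
    simpa only [map_mul, map_smul, FreeAlgebra.lift_ι_apply] using hx a b c⟩

lemma lift_gen {A : Type*} [Semiring A] [Algebra ℂ A] (x : Fin N → A)
    (hx : ∀ a b c, x a * x b * x c = j • (x b * x c * x a)) (a : Fin N) :
    lift x hx (gen j a) = x a := by
  simp [lift, gen]

abbrev MonomialIndex (N : ℕ) := Unit ⊕ Fin N ⊕ (Fin N × Fin N) ⊕ CyclicRep N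

lemma card_monomialIndex :
    Fintype.card (MonomialIndex N) = N * (N + 1) * (N + 2) / 3 + 1 := by
  have h := add_three_mul_card_cyclicRep (N := N)
  have h3 : N * (N + 1) * (N + 2) = 3 * (N + N * N + Fintype.card (CyclicRep N)) := by
    linarith
  simp only [Fintype.card_sum, Fintype.card_unit, Fintype.card_fin, Fintype.card_prod, h3]
  omega

def monomial (j : ℂ) : MonomialIndex N → RingQuot (ternaryRel j N)
  | .inl () => 1
  | .inr (.inl a) => gen j a
  | .inr (.inr (.inl (a, b))) => gen j a * gen j b
  | .inr (.inr (.inr ⟨(a, b, c), _⟩)) => gen j a * gen j b * gen j c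

lemma gen_mul_gen_mul_gen_mem_span (hj1 : j ≠ 1) (a b c : Fin N) :
    gen j a * gen j b * gen j c ∈ Submodule.span ℂ (Set.range (monomial j)) := by
  by_cases hfix : rot (a, b, c) = (a, b, c)
  · obtain ⟨rfl, rfl, -⟩ : b = a ∧ c = b ∧ a = c := by simpa [rot] using hfix
    rw [cube_eq_zero_of_ternary gen_mul_gen_mul_gen hj1]
    exact Submodule.zero_mem _
  rcases isOrbitMin_or rot_rot_rot lexKey_injective hfix with h | h | h
  · exact Submodule.subset_span ⟨.inr (.inr (.inr ⟨_, h⟩)), rfl⟩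
  · rw [gen_mul_gen_mul_gen]
    exact Submodule.smul_mem _ _ (Submodule.subset_span ⟨.inr (.inr (.inr ⟨_, h⟩)), rfl⟩)
  · rw [gen_mul_gen_mul_gen, gen_mul_gen_mul_gen, smul_smul]
    exact Submodule.smul_mem _ _ (Submodule.subset_span ⟨.inr (.inr (.inr ⟨_, h⟩)), rfl⟩)

lemma gen_mul_monomial_mem_span (hj : j ^ 3 = 1) (hj1 : j ≠ 1) (a : Fin N)
    (β : MonomialIndex N) :
    gen j a * monomial j β ∈ Submodule.span ℂ (Set.range (monomial j)) := by
  rcases β with ⟨⟩ | b | ⟨b, c⟩ | ⟨⟨b, c, d⟩, _⟩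
  · rw [monomial, mul_one]
    exact Submodule.subset_span ⟨.inr (.inl a), rfl⟩
  · exact Submodule.subset_span ⟨.inr (.inr (.inl (a, b))), rfl⟩
  · rw [monomial, ← mul_assoc]
    exact gen_mul_gen_mul_gen_mem_span hj1 a b c
  · rw [monomial, ← mul_assoc, ← mul_assoc,
      mul_mul_mul_eq_zero_of_ternary gen_mul_gen_mul_gen hj hj1]
    exact Submodule.zero_mem _

lemma span_monomial_eq_top (hj : j ^ 3 = 1) (hj1 : j ≠ 1) :
    Submodule.span ℂ (Set.range (monomial (N := N) j)) = ⊤ := by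
  set W := Submodule.span ℂ (Set.range (monomial (N := N) j))
  suffices h : ∀ z, ∀ w ∈ W, z * w ∈ W by
    refine Submodule.eq_top_iff'.mpr fun z => ?_
    simpa using h z 1 (Submodule.subset_span ⟨.inl (), rfl⟩)
  intro z
  obtain ⟨y, rfl⟩ := RingQuot.mkAlgHom_surjective ℂ (ternaryRel j N) z
  induction y using FreeAlgebra.induction with
  | grade0 r =>
    intro w hw
    rw [AlgHom.commutes, Algebra.algebraMap_eq_smul_one, smul_one_mul]
    exact W.smul_mem r hw
  | grade1 a =>
    intro w hw
    induction hw using Submodule.span_induction with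
    | mem _ hw => obtain ⟨β, rfl⟩ := hw; exact gen_mul_monomial_mem_span hj hj1 a β
    | zero => simp
    | add u v _ _ hu hv => rw [mul_add]; exact W.add_mem hu hv
    | smul r u _ hu => rw [mul_smul_comm]; exact W.smul_mem r hu
  | mul y₁ y₂ h₁ h₂ => intro w hw; rw [map_mul, mul_assoc]; exact h₁ _ (h₂ w hw)
  | add y₁ y₂ h₁ h₂ =>
    intro w hw
    rw [map_add, add_mul]
    exact W.add_mem (h₁ w hw) (h₂ w hw)

open Finsupp (single)

/-- The image of `θ a * θ b * θ c` for `t = (a, b, c)`: forced by `θ_t = j • θ_(rot t)` to be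
`j ^ k` times the basis vector of the orbit minimum `rot^[k] t`. -/
noncomputable def cubicVector (j : ℂ) (t : Triple N) : MonomialIndex N →₀ ℂ :=
  if h : IsOrbitMin lexKey rot t then single (.inr (.inr (.inr ⟨t, h⟩))) 1
  else if h : IsOrbitMin lexKey rot (rot t) then single (.inr (.inr (.inr ⟨rot t, h⟩))) j
  else if h : IsOrbitMin lexKey rot (rot (rot t)) then
    single (.inr (.inr (.inr ⟨rot (rot t), h⟩))) (j ^ 2)
  else 0

lemma cubicVector_eq_smul_cubicVector_rot (hj : j ^ 3 = 1) (t : Triple N) :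
    cubicVector j t = j • cubicVector j (rot t) := by
  have hrot := rot_rot_rot (N := N)
  by_cases h₀ : IsOrbitMin lexKey rot t
  · simp [cubicVector, rot_rot_rot, h₀, h₀.not_apply hrot, h₀.not_apply_apply hrot,
      ← pow_succ', hj]
  by_cases h₁ : IsOrbitMin lexKey rot (rot t)
  · simp [cubicVector, h₀, h₁]
  by_cases h₂ : IsOrbitMin lexKey rot (rot (rot t))
  · simp [cubicVector, h₀, h₁, h₂, pow_two]
  · simp [cubicVector, rot_rot_rot, h₀, h₁, h₂]

noncomputable def genImage (j : ℂ) (a : Fin N) : MonomialIndex N → MonomialIndex N →₀ ℂ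
  | .inl () => single (.inr (.inl a)) 1
  | .inr (.inl b) => single (.inr (.inr (.inl (a, b)))) 1
  | .inr (.inr (.inl (b, c))) => cubicVector j (a, b, c)
  | .inr (.inr (.inr _)) => 0

noncomputable def genOp (j : ℂ) (a : Fin N) : Module.End ℂ (MonomialIndex N →₀ ℂ) :=
  Finsupp.linearCombination ℂ (genImage j a)

@[simp]
lemma genOp_single (a : Fin N) (β : MonomialIndex N) (r : ℂ) :
    genOp j a (single β r) = r • genImage j a β :=
  Finsupp.linearCombination_single ℂ r β

lemma genOp_cubicVector (a : Fin N) (t : Triple N) : genOp j a (cubicVector j t) = 0 := by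
  unfold cubicVector
  split_ifs <;> simp [genImage]

lemma genOp_mul_genOp_mul_genOp (hj : j ^ 3 = 1) (a b c : Fin N) :
    genOp j a * genOp j b * genOp j c = j • (genOp j b * genOp j c * genOp j a) := by
  refine Finsupp.basisSingleOne.ext fun β => ?_
  rcases β with ⟨⟩ | d | ⟨d, d'⟩ | _
  · simpa [genImage, rot] using cubicVector_eq_smul_cubicVector_rot hj (a, b, c)
  all_goals simp [genImage, genOp_cubicVector]

noncomputable def modelRep (hj : j ^ 3 = 1) :
    RingQuot (ternaryRel j N) →ₐ[ℂ] Module.End ℂ (MonomialIndex N →₀ ℂ) :=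
  lift (genOp j) fun a b c => genOp_mul_genOp_mul_genOp hj a b c

lemma modelRep_monomial (hj : j ^ 3 = 1) (β : MonomialIndex N) :
    modelRep hj (monomial j β) (single (.inl ()) 1) = single β 1 := by
  rcases β with ⟨⟩ | a | ⟨a, b⟩ | ⟨⟨a, b, c⟩, h⟩
  all_goals simp [modelRep, monomial, lift_gen, genImage]
  exact dif_pos h

lemma linearIndependent_monomial (hj : j ^ 3 = 1) :
    LinearIndependent ℂ (monomial (N := N) j) := by
  refine LinearIndependent.of_comp
    (LinearMap.applyₗ (single (.inl ()) 1) ∘ₗ (modelRep hj).toLinearMap) ?_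
  convert (Finsupp.basisSingleOne (R := ℂ) (ι := MonomialIndex N)).linearIndependent
  ext1 β
  simpa using modelRep_monomial hj β

end TernaryGrassmann

/-- the ternary Grassmann algebra on `N` generators is a
finite-dimensional `ℂ`-vector space of dimension `N(N+1)(N+2)/3 + 1`. -/
theorem ternaryGrassmann_finrank (N : ℕ) (j : ℂ) (hj : j ^ 3 = 1) (hj1 : j ≠ 1) :
    FiniteDimensional ℂ (RingQuot (ternaryRel j N)) ∧
      Module.finrank ℂ (RingQuot (ternaryRel j N)) = N * (N + 1) * (N + 2) / 3 + 1 := by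
  open TernaryGrassmann in
  let b := Module.Basis.mk (linearIndependent_monomial (N := N) hj)
    (span_monomial_eq_top hj hj1).ge
  exact ⟨Module.Finite.of_basis b, by rw [Module.finrank_eq_card_basis b, card_monomialIndex]⟩
end

section
/- In the ternary Grassmann algebra G_N, the ℂ-subspace spanned by all ternary products θ a * θ b * θ c (a, b, c ranging over all indices) has dimension (N³ − N)/3. -/
/-- The generator `θ a` of the ternary Grassmann algebra, i.e. the image of `X a`. -/
noncomputable def theta (j : ℂ) (N : ℕ) (a : Fin N) : RingQuot (ternaryRel j N) :=
  RingQuot.mkAlgHom ℂ (ternaryRel j N) (FreeAlgebra.ι ℂ a)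

open LinearMap Finset

namespace TernaryGrassmann

section CyclicSum

variable {K : Type*} [CommRing K] {ι : Type*}

def cyclicSum (σ : Equiv.Perm ι) (ω : K) : Module.End K (ι → K) :=
  1 + ω • funLeft K K σ + ω ^ 2 • funLeft K K ⇑(σ ^ 2)

variable {σ : Equiv.Perm ι} {ω : K}

lemma cyclicSum_apply (f : ι → K) (i : ι) :
    cyclicSum σ ω f i = f i + ω * f (σ i) + ω ^ 2 * f (σ (σ i)) := by
  simp [cyclicSum, sq, funLeft_apply]

lemma mul_cyclicSum_apply_perm (hσ : σ ^ 3 = 1) (hω : ω ^ 3 = 1) (f : ι → K) (i : ι) :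
    ω * cyclicSum σ ω f (σ i) = cyclicSum σ ω f i := by
  have hi : σ (σ (σ i)) = i := by simpa [pow_succ] using congrArg (· i) hσ
  simp only [cyclicSum_apply, hi]
  linear_combination f i * hω

lemma cyclicSum_mul_self (hσ : σ ^ 3 = 1) (hω : ω ^ 3 = 1) :
    cyclicSum σ ω * cyclicSum σ ω = (3 : K) • cyclicSum σ ω := by
  refine LinearMap.ext fun f => funext fun i => ?_
  rw [Module.End.mul_apply, cyclicSum_apply (cyclicSum σ ω f), LinearMap.smul_apply,
    Pi.smul_apply, smul_eq_mul, mul_cyclicSum_apply_perm hσ hω, sq, mul_assoc,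
    mul_cyclicSum_apply_perm hσ hω,
    mul_cyclicSum_apply_perm hσ hω]
  ring

lemma smul_cyclicSum_comp_perm (hσ : σ ^ 3 = 1) (hω : ω ^ 3 = 1) (f : ι → K) :
    ω • cyclicSum σ ω (f ∘ σ) = cyclicSum σ ω f := by
  ext i
  rw [Pi.smul_apply, smul_eq_mul, ← mul_cyclicSum_apply_perm hσ hω f i]
  simp only [cyclicSum_apply, Function.comp_apply]

lemma trace_funLeft [Fintype ι] [DecidableEq ι] (τ : ι → ι) :
    trace K (ι → K) (funLeft K K τ) = #{i | τ i = i} := by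
  rw [trace_eq_matrix_trace K (Pi.basisFun K ι), Matrix.trace, Finset.natCast_card_filter]
  refine Finset.sum_congr rfl fun i _ => ?_
  simp [funLeft_apply, Pi.single_apply]

lemma trace_cyclicSum [Nontrivial K] [Fintype ι] [DecidableEq ι] :
    trace K (ι → K) (cyclicSum σ ω) =
      Fintype.card ι + ω * #{i | σ i = i} + ω ^ 2 * #{i | (σ ^ 2) i = i} := by
  simp only [cyclicSum, map_add, map_smul, trace_one, trace_funLeft,
    Module.finrank_fintype_fun_eq_card, smul_eq_mul]

variable {M : Type*} [AddCommGroup M] [Module K M] (v : ι → M)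

lemma linearCombination_comp_cyclicSum [Fintype ι] (hv : ∀ i, v (σ i) = ω • v i) :
    Fintype.linearCombination K v ∘ₗ cyclicSum σ ω =
      (3 : K) • Fintype.linearCombination K v := by
  have hv2 : ∀ i, v (σ (σ i)) = ω ^ 2 • v i := fun i => by rw [hv, hv, smul_smul, sq]
  refine LinearMap.ext fun f => ?_
  have h1 : ∑ i, (ω * f (σ i)) • v i = ∑ i, f i • v i := by
    simp_rw [mul_comm ω, mul_smul, ← hv]
    exact Equiv.sum_comp σ (fun i => f i • v i)
  have h2 : ∑ i, (ω ^ 2 * f (σ (σ i))) • v i = ∑ i, f i • v i := by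
    simp_rw [mul_comm (ω ^ 2), mul_smul, ← hv2]
    exact Equiv.sum_comp (σ.trans σ) (fun i => f i • v i)
  rw [LinearMap.comp_apply, Fintype.linearCombination_apply]
  simp only [cyclicSum_apply (σ := σ) (ω := ω) f, add_smul, Finset.sum_add_distrib, h1, h2,
    LinearMap.smul_apply, Fintype.linearCombination_apply]
  module

end CyclicSum

section Rank

variable {K : Type*} [Field K] {V W : Type*} [AddCommGroup V] [Module K V] [FiniteDimensional K V]
  [AddCommGroup W] [Module K W]

lemma finrank_range_mul_eq_trace {p : Module.End K V} {c : K} (hc : c ≠ 0)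
    (hp : p * p = c • p) : (Module.finrank K (range p) : K) * c = trace K V p := by
  have he : IsIdempotentElem (c⁻¹ • p) := by
    rw [IsIdempotentElem, smul_mul_smul_comm, hp, smul_smul, inv_mul_cancel_right₀ hc]
  have hr : range (c⁻¹ • p) = range p := range_smul p _ (inv_ne_zero hc)
  rw [← hr, ← he.isProj_range.trace, map_smul, smul_eq_mul, mul_comm c⁻¹,
    inv_mul_cancel_right₀ hc]

lemma finrank_range_eq_of_comp {f : V →ₗ[K] W} {g : W →ₗ[K] V} {p : Module.End K V} {c : K}
    (hc : c ≠ 0) (hfp : f ∘ₗ p = c • f) (hgf : g ∘ₗ f = p) :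
    Module.finrank K (range f) = Module.finrank K (range p) := by
  apply le_antisymm
  · calc Module.finrank K (range f) = Module.finrank K (range (f ∘ₗ p)) := by
          rw [hfp, range_smul f c hc]
      _ ≤ Module.finrank K (range p) := by
          rw [range_comp]; exact Submodule.finrank_map_le f _
  · calc Module.finrank K (range p) = Module.finrank K (range (g ∘ₗ f)) := by rw [hgf]
      _ ≤ Module.finrank K (range f) := by
          rw [range_comp]; exact Submodule.finrank_map_le g _

end Rank

section Triples

variable {N : ℕ}

def rotate (N : ℕ) : Equiv.Perm (Fin N × Fin N × Fin N) where
  toFun t := (t.2.2, t.1, t.2.1)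
  invFun t := (t.2.1, t.2.2, t.1)
  left_inv _ := rfl
  right_inv _ := rfl

lemma rotate_pow_three (N : ℕ) : rotate N ^ 3 = 1 := rfl

lemma card_diagonal :
    #{t : Fin N × Fin N × Fin N | t.1 = t.2.1 ∧ t.2.1 = t.2.2} = N := by
  have : ({t | t.1 = t.2.1 ∧ t.2.1 = t.2.2} : Finset (Fin N × Fin N × Fin N)) =
      univ.image fun a => (a, a, a) := by
    ext ⟨a, b, c⟩
    simp only [mem_filter, mem_univ, true_and, mem_image, Prod.mk.injEq]
    grind
  rw [this, card_image_of_injective _ fun a b h => congrArg Prod.fst h, card_univ,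
    Fintype.card_fin]

lemma rotate_apply_eq_self_iff {t : Fin N × Fin N × Fin N} :
    rotate N t = t ↔ t.1 = t.2.1 ∧ t.2.1 = t.2.2 := by
  obtain ⟨a, b, c⟩ := t
  simp only [rotate, Equiv.coe_fn_mk, Prod.mk.injEq]
  grind

lemma rotate_sq_apply_eq_self_iff {t : Fin N × Fin N × Fin N} :
    (rotate N ^ 2) t = t ↔ t.1 = t.2.1 ∧ t.2.1 = t.2.2 := by
  obtain ⟨a, b, c⟩ := t
  simp only [sq, Equiv.Perm.mul_apply, rotate, Equiv.coe_fn_mk, Prod.mk.injEq]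
  grind

lemma trace_cyclicSum_rotate {K : Type*} [CommRing K] [Nontrivial K] {ω : K}
    (hω : 1 + ω + ω ^ 2 = 0) :
    trace K _ (cyclicSum (rotate N) ω) = (N : K) ^ 3 - N := by
  simp only [trace_cyclicSum, rotate_apply_eq_self_iff, rotate_sq_apply_eq_self_iff,
    card_diagonal, Fintype.card_prod, Fintype.card_fin, Nat.cast_mul]
  linear_combination (N : K) * hω

lemma three_mul_finrank_range_cyclicSum_rotate {K : Type*} [Field K] [CharZero K] {ω : K}
    (hω : 1 + ω + ω ^ 2 = 0) :
    3 * Module.finrank K (range (cyclicSum (rotate N) ω)) = N ^ 3 - N := by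
  have hω3 : ω ^ 3 = 1 := by linear_combination (ω - 1) * hω
  have h := finrank_range_mul_eq_trace three_ne_zero (cyclicSum_mul_self (rotate_pow_three N) hω3)
  rw [trace_cyclicSum_rotate hω] at h
  have hle : N ≤ N ^ 3 := Nat.le_self_pow three_ne_zero N
  exact_mod_cast (by push_cast [Nat.cast_sub hle]; linear_combination h :
    ((3 * Module.finrank K (range (cyclicSum (rotate N) ω)) : ℕ) : K) = (N ^ 3 - N : ℕ))

end Triples

section Representation

variable {N : ℕ} {j : ℂ}

def prepend {K α β : Type*} [CommRing K] [DecidableEq α] (a : α) :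
    (β → K) →ₗ[K] (α × β → K) where
  toFun f p := if p.1 = a then f p.2 else 0
  map_add' f g := by ext p; by_cases h : p.1 = a <;> simp [h]
  map_smul' c f := by ext p; by_cases h : p.1 = a <;> simp [h]

lemma prepend_single {K α β : Type*} [CommRing K] [DecidableEq α] [DecidableEq β]
    (a : α) (b : β) (x : K) : prepend a (Pi.single b x) = Pi.single (a, b) x := by
  ext ⟨a', b'⟩
  simp only [prepend, coe_mk, AddHom.coe_mk, Pi.single_apply, Prod.mk.injEq]
  split_ifs <;> grind

abbrev FockSpace (N : ℕ) :=
  ℂ × (Fin N → ℂ) × (Fin N × Fin N → ℂ) × (Fin N × Fin N × Fin N → ℂ)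

def creation (j : ℂ) (a : Fin N) : Module.End ℂ (FockSpace N) where
  toFun v := (0, LinearMap.single ℂ (fun _ => ℂ) a v.1, prepend a v.2.1,
    cyclicSum (rotate N) j (prepend a v.2.2.1))
  map_add' v w := by simp only [Prod.fst_add, Prod.snd_add, map_add, Prod.mk_add_mk, add_zero]
  map_smul' c v := by
    simp only [Prod.smul_fst, Prod.smul_snd, map_smul, Prod.smul_mk, smul_zero, RingHom.id_apply]

lemma creation_creation_creation (a b c : Fin N) (v : FockSpace N) :
    creation j a (creation j b (creation j c v)) =
      (0, 0, 0, cyclicSum (rotate N) j (Pi.single (a, b, c) v.1)) := by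
  simp [creation, prepend_single]

lemma creation_mul_creation_mul_creation (hj : j ^ 3 = 1) (a b c : Fin N) :
    creation j a * creation j b * creation j c =
      j • (creation j b * creation j c * creation j a) := by
  refine LinearMap.ext fun v => ?_
  have hrot : cyclicSum (rotate N) j (Pi.single (a, b, c) v.1) =
      j • cyclicSum (rotate N) j (Pi.single (b, c, a) v.1) := by
    rw [← smul_cyclicSum_comp_perm (rotate_pow_three N) hj, Pi.single_comp_equiv]
    rfl
  simp only [Module.End.mul_apply, LinearMap.smul_apply, creation_creation_creation, hrot,
    Prod.smul_mk, smul_zero]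

noncomputable def representation (hj : j ^ 3 = 1) (N : ℕ) :
    RingQuot (ternaryRel j N) →ₐ[ℂ] Module.End ℂ (FockSpace N) :=
  RingQuot.liftAlgHom ℂ ⟨FreeAlgebra.lift ℂ (creation j), by
    rintro _ _ ⟨a, b, c⟩
    simpa only [map_mul, map_smul, FreeAlgebra.lift_ι_apply]
      using creation_mul_creation_mul_creation hj a b c⟩

lemma representation_theta (hj : j ^ 3 = 1) (a : Fin N) :
    representation hj N (theta j N a) = creation j a := by
  rw [theta, representation, RingQuot.liftAlgHom_mkAlgHom_apply, FreeAlgebra.lift_ι_apply]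

noncomputable def tripleProduct (j : ℂ) (N : ℕ) (t : Fin N × Fin N × Fin N) :
    RingQuot (ternaryRel j N) :=
  theta j N t.1 * theta j N t.2.1 * theta j N t.2.2

lemma tripleProduct_rotate (t : Fin N × Fin N × Fin N) :
    tripleProduct j N (rotate N t) = j • tripleProduct j N t := by
  simp only [tripleProduct, theta, ← map_mul, ← map_smul]
  exact RingQuot.mkAlgHom_rel ℂ (ternaryRel.rel t.2.2 t.1 t.2.1)

noncomputable def vacuumTripleCoeff (hj : j ^ 3 = 1) (N : ℕ) :
    RingQuot (ternaryRel j N) →ₗ[ℂ] (Fin N × Fin N × Fin N → ℂ) where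
  toFun g := (representation hj N g (1, 0, 0, 0)).2.2.2
  map_add' g h := by simp
  map_smul' c g := by simp

lemma vacuumTripleCoeff_comp_linearCombination (hj : j ^ 3 = 1) :
    vacuumTripleCoeff hj N ∘ₗ Fintype.linearCombination ℂ (tripleProduct j N) =
      cyclicSum (rotate N) j := by
  refine (Pi.basisFun ℂ _).ext fun t => ?_
  simp [vacuumTripleCoeff, tripleProduct, representation_theta, creation_creation_creation]

end Representation

end TernaryGrassmann

open TernaryGrassmann in
/-- in the ternary Grassmann algebra `G_N`, the `ℂ`-subspace spanned by
all ternary products `θ a * θ b * θ c` has dimension `(N³ − N)/3`. -/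
theorem ternaryGrassmann_span_ternary_products_finrank
    (N : ℕ) (j : ℂ) (hj : j ^ 3 = 1) (hj1 : j ≠ 1) :
    Module.finrank ℂ
      (Submodule.span ℂ (Set.range fun t : Fin N × Fin N × Fin N =>
        theta j N t.1 * theta j N t.2.1 * theta j N t.2.2)) = (N ^ 3 - N) / 3 := by
  have hsum : 1 + j + j ^ 2 = 0 := by
    have : (j - 1) * (1 + j + j ^ 2) = 0 := by linear_combination hj
    exact (mul_eq_zero.mp this).resolve_left (sub_ne_zero.mpr hj1)
  have hrank := finrank_range_eq_of_comp three_ne_zero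
    (linearCombination_comp_cyclicSum (tripleProduct j N) tripleProduct_rotate)
    (vacuumTripleCoeff_comp_linearCombination (N := N) hj)
  change Module.finrank ℂ (Submodule.span ℂ (Set.range (tripleProduct j N))) = _
  rw [← Fintype.range_linearCombination, hrank,
    ← three_mul_finrank_range_cyclicSum_rotate hsum, Nat.mul_div_cancel_left _ three_pos]
end

section
/- In the ternary Grassmann algebra G_N, the N² binary products θ a * θ b (a, b ranging over all indices) form a linearly independent family over ℂ. -/
/-- Index type for the truncated space: degree 0, 1, 2 basis vectors. -/
abbrev GIdx (N : ℕ) := Unit ⊕ Fin N ⊕ (Fin N × Fin N)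

/-- The generator action on the truncated space. -/
noncomputable def Tgen (N : ℕ) (a : Fin N) : (GIdx N → ℂ) →ₗ[ℂ] (GIdx N → ℂ) where
  toFun v i := match i with
    | .inl _ => 0
    | .inr (.inl b) => if b = a then v (.inl ()) else 0
    | .inr (.inr p) => if p.2 = a then v (.inr (.inl p.1)) else 0
  map_add' u v := by
    funext i
    rcases i with _ | b | p <;> simp only [Pi.add_apply] <;> (try dsimp only) <;>
      (try split_ifs) <;> simp_all
  map_smul' c v := by
    funext i
    rcases i with _ | b | p <;>
      simp only [Pi.smul_apply, RingHom.id_apply, smul_eq_mul] <;> (try dsimp only) <;>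
      (try split_ifs) <;> simp_all

lemma Tgen_triple (N : ℕ) (a b c : Fin N) :
    Tgen N a * Tgen N b * Tgen N c = 0 := by
  apply LinearMap.ext
  intro v
  funext i
  simp only [Module.End.mul_apply, LinearMap.zero_apply, Pi.zero_apply, Tgen,
    LinearMap.coe_mk, AddHom.coe_mk]
  rcases i with _ | b' | p <;> dsimp only <;> (try split_ifs) <;> rfl

noncomputable def Grep (j : ℂ) (N : ℕ) :
    RingQuot (ternaryRel j N) →ₐ[ℂ] ((GIdx N → ℂ) →ₗ[ℂ] (GIdx N → ℂ)) :=
  RingQuot.liftAlgHom ℂ ⟨FreeAlgebra.lift ℂ (Tgen N), by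
    rintro _ _ ⟨a, b, c⟩
    simp [map_mul, Tgen_triple]⟩

lemma Grep_theta (j : ℂ) (N : ℕ) (a : Fin N) :
    Grep j N (theta j N a) = Tgen N a := by
  simp [Grep, theta, RingQuot.liftAlgHom_mkAlgHom_apply]

/-- The degree-0 basis vector. -/
noncomputable def e0 (N : ℕ) : GIdx N → ℂ := fun i => match i with
  | .inl _ => 1
  | _ => 0

lemma key (j : ℂ) (N : ℕ) (p : Fin N × Fin N) :
    Grep j N (theta j N p.1 * theta j N p.2) (e0 N)
      = Pi.single (Sum.inr (Sum.inr (p.2, p.1)) : GIdx N) 1 := by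
  rw [map_mul, Grep_theta, Grep_theta]
  funext i
  simp only [Module.End.mul_apply, Tgen, LinearMap.coe_mk, AddHom.coe_mk, e0]
  rcases i with _ | b | q
  · simp [Pi.single_apply]
  · simp only [Pi.single_apply]
    split_ifs <;> simp_all
  · obtain ⟨b, c⟩ := q
    simp only [Pi.single_apply]
    by_cases h1 : c = p.1 <;> by_cases h2 : b = p.2 <;>
      simp [h1, h2, Prod.ext_iff, eq_comm]

/-- in the ternary Grassmann algebra `G_N`, the `N²` binary products
`θ a * θ b` form a linearly independent family over `ℂ`. -/
theorem ternaryGrassmann_binary_products_linearIndependent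
    (N : ℕ) (j : ℂ) (hj : j ^ 3 = 1) (hj1 : j ≠ 1) :
    LinearIndependent ℂ (fun p : Fin N × Fin N => theta j N p.1 * theta j N p.2) := by
  rw [Fintype.linearIndependent_iff]
  intro g hg p
  have h1 : ∑ q : Fin N × Fin N,
      g q • (Pi.single (Sum.inr (Sum.inr (q.2, q.1)) : GIdx N) (1 : ℂ) : GIdx N → ℂ) = 0 := by
    have h := congrArg (fun x => Grep j N x (e0 N)) hg
    simp only [map_sum, map_smul, LinearMap.sum_apply, LinearMap.smul_apply,
      map_zero, LinearMap.zero_apply] at h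
    simpa only [key] using h
  have h2 := congrFun h1 (Sum.inr (Sum.inr (p.2, p.1)))
  simp only [Finset.sum_apply, Pi.smul_apply, Pi.single_apply, smul_eq_mul,
    Pi.zero_apply, Sum.inr.injEq, Prod.mk.injEq] at h2
  have h3 : ∑ x : Fin N × Fin N, (if p = x then g x else 0)
      = ∑ x : Fin N × Fin N, g x * if p.2 = x.2 ∧ p.1 = x.1 then 1 else 0 :=
    Finset.sum_congr rfl (fun q _ => by
      by_cases h : p = q
      · subst h; simp
      · have hq : ¬(p.2 = q.2 ∧ p.1 = q.1) := fun hc => h (Prod.ext hc.2 hc.1)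
        simp [h, hq])
  rw [h2] at h3
  simpa using h3
end

section
/- In the ternary Grassmann algebra G_N, an odd permutation of the factors in a ternary product leads to an independent quantity: for pairwise distinct indices a, b, c, the two elements θ a * θ b * θ c and θ a * θ c * θ b are linearly independent over ℂ. -/
/-!
A linear functional on the free algebra that vanishes on `p * (x - y) * q` for every defining
relation `x ~ y` descends to `G_N`. Take the functional that is `1, j², j` on the words
`abc, bca, cab` and `0` on every other word. Since `j³ = 1`, the weight of `uvw` is `j` times
that of `vwu`, and words longer than three get weight `0`, so the relations are respected. It
takes the value `1` on `abc` and `0` on `acb`, which lies in another cyclic class; the functional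
built from `(a, c, b)` does the reverse, so the coefficients of any vanishing combination of
`θ a θ b θ c` and `θ a θ c θ b` are both zero.
-/

namespace RingQuot

variable {A M : Type*} [Semiring A] [AddCommMonoid M] {r : A → A → Prop}

theorem map_eq_of_mkRingHom_eq (f : A →+ M)
    (hf : ∀ ⦃x y⦄, r x y → ∀ p q, f (p * x * q) = f (p * y * q))
    {x y : A} (h : mkRingHom r x = mkRingHom r y) : f x = f y := by
  have hrel : ∀ ⦃x y⦄, Rel r x y → ∀ p q, f (p * x * q) = f (p * y * q) := by
    intro x y hxy
    induction hxy with
    | of h => exact hf h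
    | add_left _ ih => intro p q; simp only [mul_add, add_mul, map_add, ih]
    | mul_left _ ih => intro p q; simpa only [mul_assoc] using ih p (_ * q)
    | mul_right _ ih => intro p q; simpa only [mul_assoc] using ih (p * _) q
  simp only [mkRingHom_def, RingHom.coe_mk, MonoidHom.coe_mk, OneHom.coe_mk, mk.injEq] at h
  simpa using congrArg (Quot.lift f fun x y hxy => by simpa using hrel hxy 1 1) h

end RingQuot

namespace FreeAlgebra

variable {R X : Type*} [CommSemiring R]

theorem basisFreeMonoid_apply (w : FreeMonoid X) :
    basisFreeMonoid R X w = FreeMonoid.lift (ι R) w := by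
  simp [basisFreeMonoid, equivMonoidAlgebraFreeMonoid]

theorem constr_basisFreeMonoid_mul_mul {g : FreeMonoid X → R} {w₁ w₂ : FreeMonoid X} {c : R}
    (hg : ∀ s t, g (s * w₁ * t) = c * g (s * w₂ * t)) (p q : FreeAlgebra R X) :
    (basisFreeMonoid R X).constr R g (p * basisFreeMonoid R X w₁ * q)
      = c * (basisFreeMonoid R X).constr R g (p * basisFreeMonoid R X w₂ * q) := by
  set b := basisFreeMonoid R X
  have hb : ∀ s t, b (s * t) = b s * b t := by simp [b, basisFreeMonoid_apply]
  have on_words : ∀ s q, b.constr R g (b s * b w₁ * q) = c * b.constr R g (b s * b w₂ * q) := by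
    intro s
    refine LinearMap.congr_fun (b.ext (f₁ := b.constr R g ∘ₗ LinearMap.mulLeft R (b s * b w₁))
      (f₂ := c • b.constr R g ∘ₗ LinearMap.mulLeft R (b s * b w₂)) fun t => ?_)
    simp [← hb, hg]
  have on_all := b.ext (f₁ := b.constr R g ∘ₗ LinearMap.mulRight R (b w₁ * q))
    (f₂ := c • b.constr R g ∘ₗ LinearMap.mulRight R (b w₂ * q))
    fun s => by simpa [mul_assoc] using on_words s q
  simpa [mul_assoc] using LinearMap.congr_fun on_all p

theorem ι_mul_ι_mul_ι_eq_basisFreeMonoid (u v w : X) :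
    ι R u * ι R v * ι R w
      = basisFreeMonoid R X (FreeMonoid.of u * FreeMonoid.of v * FreeMonoid.of w) := by
  simp [basisFreeMonoid_apply]

end FreeAlgebra

section CyclicWeight

variable {R X : Type*} [CommRing R] [DecidableEq X]

def cyclicWeight (j : R) (a b c : X) : List X → R
  | [u, v, w] =>
    if [u, v, w] = [a, b, c] then 1 else if [u, v, w] = [b, c, a] then j ^ 2
    else if [u, v, w] = [c, a, b] then j else 0
  | _ => 0

theorem cyclicWeight_self (j : R) (a b c : X) : cyclicWeight j a b c [a, b, c] = 1 := by
  simp [cyclicWeight]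

theorem cyclicWeight_swap (j : R) {a b c : X} (hab : a ≠ b) (hac : a ≠ c) (hbc : b ≠ c) :
    cyclicWeight j a b c [a, c, b] = 0 := by
  simp [cyclicWeight, hab, hac, hbc, hab.symm, hac.symm, hbc.symm]

theorem cyclicWeight_of_length_ne_three {j : R} {a b c : X} {l : List X} (hl : l.length ≠ 3) :
    cyclicWeight j a b c l = 0 := by
  rcases l with _ | ⟨_, _ | ⟨_, _ | ⟨_, _ | ⟨_, _⟩⟩⟩⟩ <;> simp_all [cyclicWeight]

theorem cyclicWeight_rotate {j : R} (hj : j ^ 3 = 1) {a b c : X}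
    (hab : a ≠ b) (hac : a ≠ c) (hbc : b ≠ c) (u v w : X) :
    cyclicWeight j a b c [u, v, w] = j * cyclicWeight j a b c [v, w, u] := by
  simp only [cyclicWeight]
  split_ifs <;> simp_all only [List.cons.injEq, and_true, and_false, false_and,
      and_self, not_true_eq_false, not_false_eq_true]
  all_goals first | ring1 | linear_combination -hj

theorem cyclicWeight_append_rotate {j : R} (hj : j ^ 3 = 1) {a b c : X}
    (hab : a ≠ b) (hac : a ≠ c) (hbc : b ≠ c) (s t : List X) (u v w : X) :
    cyclicWeight j a b c (s ++ [u, v, w] ++ t)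
      = j * cyclicWeight j a b c (s ++ [v, w, u] ++ t) := by
  rcases s with _ | ⟨_, s⟩ <;> rcases t with _ | ⟨_, t⟩
  · simpa using cyclicWeight_rotate hj hab hac hbc u v w
  all_goals
    rw [cyclicWeight_of_length_ne_three, cyclicWeight_of_length_ne_three, mul_zero] <;>
      simp <;> omega

open FreeAlgebra

noncomputable def cyclicFunctional (j : R) (a b c : X) : FreeAlgebra R X →ₗ[R] R :=
  (basisFreeMonoid R X).constr R fun w => cyclicWeight j a b c w.toList

theorem cyclicFunctional_ι_mul_ι_mul_ι (j : R) (a b c u v w : X) :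
    cyclicFunctional j a b c (ι R u * ι R v * ι R w) = cyclicWeight j a b c [u, v, w] := by
  simp [cyclicFunctional, ι_mul_ι_mul_ι_eq_basisFreeMonoid]

theorem cyclicFunctional_mul_ι_mul_ι_mul_ι_mul {j : R} (hj : j ^ 3 = 1) {a b c : X}
    (hab : a ≠ b) (hac : a ≠ c) (hbc : b ≠ c) (p q : FreeAlgebra R X) (u v w : X) :
    cyclicFunctional j a b c (p * (ι R u * ι R v * ι R w) * q)
      = j * cyclicFunctional j a b c (p * (ι R v * ι R w * ι R u) * q) := by
  rw [ι_mul_ι_mul_ι_eq_basisFreeMonoid, ι_mul_ι_mul_ι_eq_basisFreeMonoid]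
  refine constr_basisFreeMonoid_mul_mul (fun s t => ?_) p q
  simpa using cyclicWeight_append_rotate hj hab hac hbc s.toList t.toList u v w

end CyclicWeight

theorem cyclicFunctional_eq_of_mkAlgHom_eq {N : ℕ} {j : ℂ} (hj : j ^ 3 = 1) {a b c : Fin N}
    (hab : a ≠ b) (hac : a ≠ c) (hbc : b ≠ c) {x y : FreeAlgebra ℂ (Fin N)}
    (h : RingQuot.mkAlgHom ℂ (ternaryRel j N) x = RingQuot.mkAlgHom ℂ (ternaryRel j N) y) :
    cyclicFunctional j a b c x = cyclicFunctional j a b c y := by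
  refine RingQuot.map_eq_of_mkRingHom_eq (cyclicFunctional j a b c).toAddMonoidHom ?_
    (by rw [← RingQuot.mkAlgHom_coe ℂ]; exact h)
  rintro _ _ ⟨u, v, w⟩ p q
  simpa [mul_smul_comm, smul_mul_assoc] using
    cyclicFunctional_mul_ι_mul_ι_mul_ι_mul hj hab hac hbc p q u v w

theorem ternaryGrassmann_odd_permutation_linearIndependent_general
    (N : ℕ) (j : ℂ) (hj : j ^ 3 = 1)
    (a b c : Fin N) (hab : a ≠ b) (hac : a ≠ c) (hbc : b ≠ c) :
    LinearIndependent ℂ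
      ![theta j N a * theta j N b * theta j N c,
        theta j N a * theta j N c * theta j N b] := by
  rw [LinearIndependent.pair_iff]
  intro s t hst
  have hmk : RingQuot.mkAlgHom ℂ (ternaryRel j N)
      (s • (FreeAlgebra.ι ℂ a * FreeAlgebra.ι ℂ b * FreeAlgebra.ι ℂ c)
        + t • (FreeAlgebra.ι ℂ a * FreeAlgebra.ι ℂ c * FreeAlgebra.ι ℂ b))
      = RingQuot.mkAlgHom ℂ (ternaryRel j N) 0 := by
    simpa [theta] using hst
  have h₁ := cyclicFunctional_eq_of_mkAlgHom_eq hj hab hac hbc hmk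
  have h₂ := cyclicFunctional_eq_of_mkAlgHom_eq hj hac hab hbc.symm hmk
  simp only [map_add, map_smul, map_zero, smul_eq_mul, cyclicFunctional_ι_mul_ι_mul_ι,
    cyclicWeight_self, cyclicWeight_swap j hab hac hbc,
    cyclicWeight_swap j hac hab hbc.symm] at h₁ h₂
  constructor
  · simpa using h₁
  · simpa using h₂

/-- in the ternary Grassmann algebra `G_N`, an odd permutation of the
factors in a ternary product leads to an independent quantity: for pairwise distinct
indices `a, b, c` the elements `θ a * θ b * θ c` and `θ a * θ c * θ b` are linearly
independent over `ℂ`. -/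
theorem ternaryGrassmann_odd_permutation_linearIndependent
    (N : ℕ) (j : ℂ) (hj : j ^ 3 = 1) (hj1 : j ≠ 1)
    (a b c : Fin N) (hab : a ≠ b) (hac : a ≠ c) (hbc : b ≠ c) :
    LinearIndependent ℂ
      ![theta j N a * theta j N b * theta j N c,
        theta j N a * theta j N c * theta j N b] :=
  ternaryGrassmann_odd_permutation_linearIndependent_general N j hj a b c hab hac hbc
end

section
/- Let j ∈ ℂ be a primitive cube root of unity, A an associative unital ℂ-algebra, and θ, θ̄ : ι → A two families of elements such that (i) θ a * θ̄ b = j • (θ̄ b * θ a) for all a, b; (ii) every binary product θ b * θ̄ c commutes with every θ a, i.e. θ a * (θ b * θ̄ c) = (θ b * θ̄ c) * θ a; and (iii) every binary product θ̄ c * θ a commutes with every θ b, i.e. θ b * (θ̄ c * θ a) = (θ̄ c * θ a) * θ b. Then θ a * θ b * θ̄ c = 0 for all indices a, b, c. -/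
/-- If `j` is a primitive cube root of unity and `θ, θ̄ : ι → A` satisfy
(i) `θ a * θ̄ b = j • (θ̄ b * θ a)`, (ii) each `θ b * θ̄ c` commutes with each `θ a`, and
(iii) each `θ̄ c * θ a` commutes with each `θ b`, then `θ a * θ b * θ̄ c = 0`. -/
theorem mixed_triple_product_eq_zero
    {ι : Type*} (j : ℂ) (hj : j ^ 3 = 1) (hj1 : j ≠ 1)
    {A : Type*} [Ring A] [Algebra ℂ A] (θ θbar : ι → A)
    (h1 : ∀ a b : ι, θ a * θbar b = j • (θbar b * θ a))
    (h2 : ∀ a b c : ι, θ a * (θ b * θbar c) = (θ b * θbar c) * θ a)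
    (h3 : ∀ a b c : ι, θ b * (θbar c * θ a) = (θbar c * θ a) * θ b) :
    ∀ a b c : ι, θ a * θ b * θbar c = 0 := by
  intro a b c
  have e1 : θ a * θ b * θbar c = θbar c * θ a * θ b := by
    rw [mul_assoc, h2 a b c, mul_assoc, h3 a b c]
  have e2 : θ a * θ b * θbar c = (j ^ 2) • (θbar c * θ a * θ b) := by
    rw [mul_assoc, h1 b c, mul_smul_comm, ← mul_assoc, h1 a c, smul_mul_assoc,
      smul_smul, ← sq]
  have e3 : θ a * θ b * θbar c = (j ^ 2) • (θ a * θ b * θbar c) := by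
    conv_lhs => rw [e2, ← e1]
  have hne : (1 : ℂ) - j ^ 2 ≠ 0 := by
    intro h
    have hj2 : j ^ 2 = 1 := by linear_combination -h
    have : j = 1 := by
      have := hj
      rw [pow_succ, hj2, one_mul] at this
      exact this
    exact hj1 this
  have e4 : ((1 : ℂ) - j ^ 2) • (θ a * θ b * θbar c) = 0 := by
    rw [sub_smul, one_smul, ← e3, sub_self]
  have := congrArg (fun x => ((1 : ℂ) - j ^ 2)⁻¹ • x) e4
  simpa [inv_smul_smul₀ hne] using this
end

section
/- Let f : ℝ → ℝ be the restriction of an entire power series: there is a sequence (a_k) of reals with Σ_k a_k x^k absolutely convergent and equal to f(x) for every x ∈ ℝ. Then the function t ↦ Σ_{k=0}^∞ ((−t)^k / k!) · f^{(k)}(t) is constantly equal to f(0); that is, for every t ∈ ℝ, Σ_{k=0}^∞ ((−t)^k / k!) · (iterated derivative of f of order k at t) = f(0). -/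
open FormalMultilinearSeries

/-- if `f : ℝ → ℝ` is the restriction of an entire power series
(`Σ a_k x^k` converges absolutely to `f x` for every real `x`), then the invariant
`I(t) = Σ_{k} ((−t)^k / k!) f^{(k)}(t)` is constant, equal to `f 0`. -/
theorem sum_neg_t_pow_div_factorial_iteratedDeriv_eq
    (f : ℝ → ℝ) (a : ℕ → ℝ)
    (habs : ∀ x : ℝ, Summable fun k : ℕ => |a k * x ^ k|)
    (hf : ∀ x : ℝ, HasSum (fun k : ℕ => a k * x ^ k) (f x)) :
    ∀ t : ℝ,
      ∑' k : ℕ, ((-t) ^ k / (Nat.factorial k : ℝ)) * iteratedDeriv k f t = f 0 := by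
  intro t
  set p := FormalMultilinearSeries.ofScalars ℝ a with hp
  have hrad : p.radius = ⊤ := by
    refine ENNReal.eq_top_of_forall_nnreal_le fun r => ?_
    apply p.le_radius_of_summable
    have := habs r
    apply this.congr
    intro n
    rw [hp, FormalMultilinearSeries.ofScalars_norm, Real.norm_eq_abs, abs_mul, abs_pow,
      abs_of_nonneg r.coe_nonneg]
  have hball : HasFPowerSeriesOnBall f p 0 ⊤ := by
    refine ⟨by rw [hrad], by simp, fun {y} _ => ?_⟩
    simp only [zero_add]
    have h1 : (fun n => p n fun _ => y) = fun n => a n * y ^ n := by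
      funext n
      rw [hp, FormalMultilinearSeries.ofScalars_apply_eq, smul_eq_mul]
    rw [h1]
    exact hf y
  have hco := hball.changeOrigin (y := t) (by simp)
  rw [zero_add] at hco
  have htop : (⊤ : ENNReal) - ‖t‖₊ = ⊤ := by simp
  rw [htop] at hco
  have hsum := hco.hasSum_iteratedFDeriv (y := -t) (by simp)
  rw [add_neg_cancel] at hsum
  have heq : ∀ n : ℕ, ((n.factorial : ℝ))⁻¹ • iteratedFDeriv ℝ n f t (fun _ => -t)
      = ((-t) ^ n / (n.factorial : ℝ)) * iteratedDeriv n f t := by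
    intro n
    have h1 : iteratedFDeriv ℝ n f t (fun _ => -t) = (-t) ^ n • iteratedDeriv n f t := by
      rw [iteratedDeriv_eq_iteratedFDeriv]
      have : (fun _ : Fin n => -t) = fun _ : Fin n => (-t) • (1 : ℝ) := by simp
      rw [this, ContinuousMultilinearMap.map_smul_univ]
      simp
    rw [h1]
    simp [smul_eq_mul]
    ring
  rw [funext heq] at hsum
  exact hsum.tsum_eq
end

section
/- (Peterson's equations, i.e. the Codazzi–Mainardi equations.) For a smooth immersed parametrized surface r : U → ℝ³, setting Δ = L/√(EG − F²), Δ' = M/√(EG − F²), Δ'' = N/√(EG − F²), the following two identities hold at every point of U: ∂Δ/∂v − ∂Δ'/∂u + Γ²₂₂·Δ − 2Γ²₁₂·Δ' + Γ²₁₁·Δ'' = 0, and ∂Δ''/∂u − ∂Δ'/∂v + Γ¹₂₂·Δ − 2Γ¹₁₂·Δ' + Γ¹₁₁·Δ'' = 0. -/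
/-!
Write `ν = r_u × r_v`, so that `EG − F² = |ν|²` and `Δ = ⟨r_uu, ν⟩ / |ν|²`,
`Δ' = ⟨r_uv, ν⟩ / |ν|²`, `Δ'' = ⟨r_vv, ν⟩ / |ν|²`. The Christoffel symbols are the coordinates,
in the basis `r_u, r_v`, of the tangential parts of `r_uu, r_uv, r_vv` (the Gauss formulas), and
`⟨ν, ν_u⟩ = |ν|² (Γ¹₁₁ + Γ²₁₂)`, `⟨ν, ν_v⟩ = |ν|² (Γ¹₁₂ + Γ²₂₂)`. Differentiating the quotients,
the third derivatives of `r` cancel by the symmetry of mixed partials, and what is left is a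
polynomial identity between the vectors `r_u, r_v, r_uu, r_uv, r_vv`: decomposing the last three
along `r_u, r_v, ν`, only the triple products with exactly one normal factor survive.
-/

noncomputable section

/-- Euclidean dot product on `ℝ³`. -/
def dot3 (x y : Fin 3 → ℝ) : ℝ := ∑ i, x i * y i

/-- Partial derivative with respect to the first coordinate `u`. -/
def pdu {E : Type*} [NormedAddCommGroup E] [NormedSpace ℝ E]
    (f : ℝ × ℝ → E) (p : ℝ × ℝ) : E := fderiv ℝ f p (1, 0)

/-- Partial derivative with respect to the second coordinate `v`. -/
def pdv {E : Type*} [NormedAddCommGroup E] [NormedSpace ℝ E]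
    (f : ℝ × ℝ → E) (p : ℝ × ℝ) : E := fderiv ℝ f p (0, 1)

variable (r : ℝ × ℝ → Fin 3 → ℝ)

/-- Coefficient `E = ⟨r_u, r_u⟩` of the first fundamental form. -/
def Ec (p : ℝ × ℝ) : ℝ := dot3 (pdu r p) (pdu r p)

/-- Coefficient `F = ⟨r_u, r_v⟩` of the first fundamental form. -/
def Fc (p : ℝ × ℝ) : ℝ := dot3 (pdu r p) (pdv r p)

/-- Coefficient `G = ⟨r_v, r_v⟩` of the first fundamental form. -/
def Gc (p : ℝ × ℝ) : ℝ := dot3 (pdv r p) (pdv r p)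

/-- `W = √(EG − F²)`. -/
def Wc (p : ℝ × ℝ) : ℝ := Real.sqrt (Ec r p * Gc r p - Fc r p ^ 2)

/-- Unit normal `n = (r_u × r_v)/W`. -/
def nc (p : ℝ × ℝ) : Fin 3 → ℝ := (Wc r p)⁻¹ • (crossProduct (pdu r p) (pdv r p))

/-- Coefficient `L = ⟨r_uu, n⟩` of the second fundamental form. -/
def Lc (p : ℝ × ℝ) : ℝ := dot3 (pdu (pdu r) p) (nc r p)

/-- Coefficient `M = ⟨r_uv, n⟩` of the second fundamental form. -/
def Mc (p : ℝ × ℝ) : ℝ := dot3 (pdv (pdu r) p) (nc r p)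

/-- Coefficient `N = ⟨r_vv, n⟩` of the second fundamental form. -/
def Nc (p : ℝ × ℝ) : ℝ := dot3 (pdv (pdv r) p) (nc r p)

/-- Christoffel symbol `Γ¹₁₁`. -/
def Γ111 (p : ℝ × ℝ) : ℝ :=
  (Gc r p * pdu (Ec r) p - 2 * Fc r p * pdu (Fc r) p + Fc r p * pdv (Ec r) p) /
    (2 * Wc r p ^ 2)

/-- Christoffel symbol `Γ²₁₁`. -/
def Γ211 (p : ℝ × ℝ) : ℝ :=
  (2 * Ec r p * pdu (Fc r) p - Ec r p * pdv (Ec r) p - Fc r p * pdu (Ec r) p) /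
    (2 * Wc r p ^ 2)

/-- Christoffel symbol `Γ¹₁₂`. -/
def Γ112 (p : ℝ × ℝ) : ℝ :=
  (Gc r p * pdv (Ec r) p - Fc r p * pdu (Gc r) p) / (2 * Wc r p ^ 2)

/-- Christoffel symbol `Γ²₁₂`. -/
def Γ212 (p : ℝ × ℝ) : ℝ :=
  (Ec r p * pdu (Gc r) p - Fc r p * pdv (Ec r) p) / (2 * Wc r p ^ 2)

/-- Christoffel symbol `Γ¹₂₂`. -/
def Γ122 (p : ℝ × ℝ) : ℝ :=
  (2 * Gc r p * pdv (Fc r) p - Gc r p * pdu (Gc r) p - Fc r p * pdv (Gc r) p) /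
    (2 * Wc r p ^ 2)

/-- Christoffel symbol `Γ²₂₂`. -/
def Γ222 (p : ℝ × ℝ) : ℝ :=
  (Ec r p * pdv (Gc r) p - 2 * Fc r p * pdv (Fc r) p + Fc r p * pdu (Gc r) p) /
    (2 * Wc r p ^ 2)

/-- `Δ = L/√(EG − F²)`. -/
def Δ0 (p : ℝ × ℝ) : ℝ := Lc r p / Wc r p

/-- `Δ' = M/√(EG − F²)`. -/
def Δ1 (p : ℝ × ℝ) : ℝ := Mc r p / Wc r p

/-- `Δ'' = N/√(EG − F²)`. -/
def Δ2 (p : ℝ × ℝ) : ℝ := Nc r p / Wc r p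

open Filter Topology

section Calculus

variable {E F G H : Type*} [NormedAddCommGroup E] [NormedSpace ℝ E]
  [NormedAddCommGroup F] [NormedSpace ℝ F] [FiniteDimensional ℝ F]
  [NormedAddCommGroup G] [NormedSpace ℝ G] [FiniteDimensional ℝ G]
  [NormedAddCommGroup H] [NormedSpace ℝ H] {p : E}

theorem differentiableAt_bilinear (B : F →ₗ[ℝ] G →ₗ[ℝ] H) {f : E → F} {g : E → G}
    (hf : DifferentiableAt ℝ f p) (hg : DifferentiableAt ℝ g p) :
    DifferentiableAt ℝ (fun q => B (f q) (g q)) p :=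
  (B.toContinuousBilinearMap.hasFDerivAt_of_bilinear hf.hasFDerivAt hg.hasFDerivAt).differentiableAt

theorem fderiv_bilinear_apply (B : F →ₗ[ℝ] G →ₗ[ℝ] H) {f : E → F} {g : E → G}
    (hf : DifferentiableAt ℝ f p) (hg : DifferentiableAt ℝ g p) (w : E) :
    fderiv ℝ (fun q => B (f q) (g q)) p w
      = B (fderiv ℝ f p w) (g p) + B (f p) (fderiv ℝ g p w) := by
  rw [show (fun q => B (f q) (g q)) = fun q => B.toContinuousBilinearMap (f q) (g q) from rfl,
    B.toContinuousBilinearMap.fderiv_of_bilinear hf hg]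
  simp [add_comm]

theorem fderiv_div_apply {f g : E → ℝ} (hf : DifferentiableAt ℝ f p)
    (hg : DifferentiableAt ℝ g p) (hg0 : g p ≠ 0) (w : E) :
    fderiv ℝ (fun q => f q / g q) p w
      = (fderiv ℝ f p w * g p - f p * fderiv ℝ g p w) / g p ^ 2 := by
  have h : HasFDerivAt (fun q => f q / g q) _ p :=
    hf.hasFDerivAt.fun_mul ((hasDerivAt_inv hg0).comp_hasFDerivAt p hg.hasFDerivAt)
  rw [h.fderiv]
  simp only [neg_smul, smul_neg, add_apply, neg_apply, smul_apply, smul_eq_mul]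
  field_simp
  ring

end Calculus

section PartialDerivatives

variable {F : Type*} [NormedAddCommGroup F] [NormedSpace ℝ F] {f : ℝ × ℝ → F} {p : ℝ × ℝ}
  {m n : WithTop ℕ∞}

theorem fderiv_apply_one_zero (f : ℝ × ℝ → F) (p : ℝ × ℝ) : fderiv ℝ f p (1, 0) = pdu f p := rfl

theorem fderiv_apply_zero_one (f : ℝ × ℝ → F) (p : ℝ × ℝ) : fderiv ℝ f p (0, 1) = pdv f p := rfl

theorem contDiffAt_pdu (hf : ContDiffAt ℝ n f p) (hmn : m + 1 ≤ n) : ContDiffAt ℝ m (pdu f) p :=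
  (hf.fderiv_right hmn).clm_apply contDiffAt_const

theorem contDiffAt_pdv (hf : ContDiffAt ℝ n f p) (hmn : m + 1 ≤ n) : ContDiffAt ℝ m (pdv f) p :=
  (hf.fderiv_right hmn).clm_apply contDiffAt_const

theorem pdv_pdu_eq (hf : ContDiffAt ℝ n f p) (hn : 2 ≤ n) : pdv (pdu f) p = pdu (pdv f) p := by
  have hd : DifferentiableAt ℝ (fderiv ℝ f) p :=
    (hf.fderiv_right (m := 1) (by rwa [one_add_one_eq_two])).differentiableAt
      one_ne_zero
  have hsecond : ∀ v w, fderiv ℝ (fun q => fderiv ℝ f q v) p w = fderiv ℝ (fderiv ℝ f) p w v :=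
    fun v w => by simp [fderiv_clm_apply hd (differentiableAt_const v)]
  exact (hsecond _ _).trans
    ((hf.isSymmSndFDerivAt (by simpa using hn) _ _).trans (hsecond _ _).symm)

theorem differentiableAt_pdu (hf : ContDiffAt ℝ n f p) (hn : 2 ≤ n) :
    DifferentiableAt ℝ (pdu f) p :=
  (contDiffAt_pdu hf (m := 1) (by rwa [one_add_one_eq_two])).differentiableAt one_ne_zero

theorem differentiableAt_pdv (hf : ContDiffAt ℝ n f p) (hn : 2 ≤ n) :
    DifferentiableAt ℝ (pdv f) p :=
  (contDiffAt_pdv hf (m := 1) (by rwa [one_add_one_eq_two])).differentiableAt one_ne_zero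

theorem pdv_pdu_eventuallyEq (hf : ContDiffAt ℝ n f p) (hn : 2 ≤ n) :
    pdv (pdu f) =ᶠ[𝓝 p] pdu (pdv f) :=
  ((hf.of_le hn).eventually (by simp)).mono fun _ hq => pdv_pdu_eq hq le_rfl

theorem pdv_pdv_pdu_eq (hf : ContDiffAt ℝ n f p) (hn : 3 ≤ n) :
    pdv (pdv (pdu f)) p = pdu (pdv (pdv f)) p := by
  have h : pdv (pdv (pdu f)) p = pdv (pdu (pdv f)) p := by
    simp only [← fderiv_apply_zero_one,
      (pdv_pdu_eventuallyEq hf ((by norm_num : (2 : WithTop ℕ∞) ≤ 3).trans hn)).fderiv_eq]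
  rw [h, pdv_pdu_eq (contDiffAt_pdv hf (m := 2) (by rwa [two_add_one_eq_three])) le_rfl]

end PartialDerivatives

open Matrix

section DotCross

variable {E : Type*} [NormedAddCommGroup E] [NormedSpace ℝ E] {p : E}

theorem DifferentiableAt.dotProduct {ι : Type*} [Fintype ι] {f g : E → ι → ℝ}
    (hf : DifferentiableAt ℝ f p) (hg : DifferentiableAt ℝ g p) :
    DifferentiableAt ℝ (fun q => f q ⬝ᵥ g q) p :=
  differentiableAt_bilinear (dotProductBilin ℝ ℝ) hf hg

theorem DifferentiableAt.crossProduct {f g : E → Fin 3 → ℝ}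
    (hf : DifferentiableAt ℝ f p) (hg : DifferentiableAt ℝ g p) :
    DifferentiableAt ℝ (fun q => f q ⨯₃ g q) p :=
  differentiableAt_bilinear
    (_root_.crossProduct : (Fin 3 → ℝ) →ₗ[ℝ] (Fin 3 → ℝ) →ₗ[ℝ] Fin 3 → ℝ) hf hg

theorem fderiv_dotProduct_apply {ι : Type*} [Fintype ι] {f g : E → ι → ℝ}
    (hf : DifferentiableAt ℝ f p) (hg : DifferentiableAt ℝ g p) (w : E) :
    fderiv ℝ (fun q => f q ⬝ᵥ g q) p w = fderiv ℝ f p w ⬝ᵥ g p + f p ⬝ᵥ fderiv ℝ g p w :=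
  fderiv_bilinear_apply (dotProductBilin ℝ ℝ) hf hg w

theorem fderiv_crossProduct_apply {f g : E → Fin 3 → ℝ}
    (hf : DifferentiableAt ℝ f p) (hg : DifferentiableAt ℝ g p) (w : E) :
    fderiv ℝ (fun q => f q ⨯₃ g q) p w = fderiv ℝ f p w ⨯₃ g p + f p ⨯₃ fderiv ℝ g p w :=
  fderiv_bilinear_apply crossProduct hf hg w

theorem fderiv_dotProduct_div_dotProduct_self_apply {ι : Type*} [Fintype ι] {x ν : E → ι → ℝ}
    (hx : DifferentiableAt ℝ x p) (hν : DifferentiableAt ℝ ν p) (hν0 : ν p ≠ 0) (w : E) :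
    fderiv ℝ (fun q => x q ⬝ᵥ ν q / (ν q ⬝ᵥ ν q)) p w
      = ((fderiv ℝ x p w ⬝ᵥ ν p + x p ⬝ᵥ fderiv ℝ ν p w) * (ν p ⬝ᵥ ν p)
          - x p ⬝ᵥ ν p * (2 * (ν p ⬝ᵥ fderiv ℝ ν p w))) / (ν p ⬝ᵥ ν p) ^ 2 := by
  rw [fderiv_div_apply (hx.dotProduct hν) (hν.dotProduct hν)
      (by rwa [Ne, dotProduct_self_eq_zero]),
    fderiv_dotProduct_apply hx hν, fderiv_dotProduct_apply hν hν, dotProduct_comm (fderiv ℝ ν p w)]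
  ring

end DotCross

section TangentialCoordinates

/-- The coefficient of `a` in the tangential part of `x` with respect to the basis `a, b`;
the coefficient of `b` is `tangentialCoord b a x`. -/
def tangentialCoord (a b x : Fin 3 → ℝ) : ℝ :=
  ((b ⬝ᵥ b) * (a ⬝ᵥ x) - (a ⬝ᵥ b) * (b ⬝ᵥ x)) / ((a ⨯₃ b) ⬝ᵥ (a ⨯₃ b))

theorem cross_dotProduct_cross_self (a b : Fin 3 → ℝ) :
    (a ⨯₃ b) ⬝ᵥ (a ⨯₃ b) = (a ⬝ᵥ a) * (b ⬝ᵥ b) - (a ⬝ᵥ b) ^ 2 := by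
  rw [cross_dot_cross, dotProduct_comm b a]
  ring

theorem cross_dotProduct_cross_swap (a b : Fin 3 → ℝ) :
    (b ⨯₃ a) ⬝ᵥ (b ⨯₃ a) = (a ⨯₃ b) ⬝ᵥ (a ⨯₃ b) := by
  rw [← cross_anticomm, neg_dotProduct_neg]

theorem cross_dotProduct_cross_add_cross {a b : Fin 3 → ℝ} (h : a ⨯₃ b ≠ 0) (x y : Fin 3 → ℝ) :
    (a ⨯₃ b) ⬝ᵥ (x ⨯₃ b + a ⨯₃ y)
      = (a ⨯₃ b) ⬝ᵥ (a ⨯₃ b) * (tangentialCoord a b x + tangentialCoord b a y) := by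
  have hN : (a ⨯₃ b) ⬝ᵥ (a ⨯₃ b) ≠ 0 := by rwa [Ne, dotProduct_self_eq_zero]
  rw [tangentialCoord, tangentialCoord, cross_dotProduct_cross_swap a b, dotProduct_add,
    cross_dot_cross, cross_dot_cross]
  field_simp

/-- For `a, b, c, d, e = r_u, r_v, r_uu, r_uv, r_vv` the left side is
`⟨r_uu, ν_v⟩ − ⟨r_uv, ν_u⟩`. -/
theorem codazzi_vector_identity_fst {a b : Fin 3 → ℝ} (h : a ⨯₃ b ≠ 0) (c d e : Fin 3 → ℝ) :
    c ⬝ᵥ (d ⨯₃ b + a ⨯₃ e) - d ⬝ᵥ (c ⨯₃ b + a ⨯₃ d)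
      = c ⬝ᵥ (a ⨯₃ b) * (2 * tangentialCoord a b d + tangentialCoord b a e)
        - 2 * (d ⬝ᵥ (a ⨯₃ b)) * tangentialCoord a b c - e ⬝ᵥ (a ⨯₃ b) * tangentialCoord b a c := by
  have hN : (a ⨯₃ b) ⬝ᵥ (a ⨯₃ b) ≠ 0 := by rwa [Ne, dotProduct_self_eq_zero]
  simp only [tangentialCoord, cross_dotProduct_cross_swap a b]
  field_simp
  simp only [dotProduct, cross_apply, Fin.sum_univ_three, Pi.add_apply, cons_val_zero,
    cons_val_one, cons_val_two, head_cons, tail_cons] at hN ⊢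
  ring

/-- Exchanging `u` and `v` turns the first identity into the second and reverses `ν`. -/
theorem codazzi_vector_identity_snd {a b : Fin 3 → ℝ} (h : a ⨯₃ b ≠ 0) (c d e : Fin 3 → ℝ) :
    e ⬝ᵥ (c ⨯₃ b + a ⨯₃ d) - d ⬝ᵥ (d ⨯₃ b + a ⨯₃ e)
      = e ⬝ᵥ (a ⨯₃ b) * (tangentialCoord a b c + 2 * tangentialCoord b a d)
        - 2 * (d ⬝ᵥ (a ⨯₃ b)) * tangentialCoord b a e - c ⬝ᵥ (a ⨯₃ b) * tangentialCoord a b e := by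
  have hswap := codazzi_vector_identity_fst (a := b) (b := a)
    (by rwa [← cross_anticomm, neg_ne_zero]) e d c
  rw [← cross_anticomm a b, ← cross_anticomm a d, ← cross_anticomm c b, ← cross_anticomm a e,
    ← cross_anticomm d b] at hswap
  simp only [dotProduct_add, dotProduct_neg, dot_self_cross] at hswap ⊢
  linear_combination -hswap

end TangentialCoordinates

def crossNormal (q : ℝ × ℝ) : Fin 3 → ℝ := pdu r q ⨯₃ pdv r q

section Surface

variable {r} {p : ℝ × ℝ}

theorem dot3_eq_dotProduct (x y : Fin 3 → ℝ) : dot3 x y = x ⬝ᵥ y := rfl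

theorem Wc_sq (q : ℝ × ℝ) : Wc r q ^ 2 = crossNormal r q ⬝ᵥ crossNormal r q := by
  have h : Ec r q * Gc r q - Fc r q ^ 2 = crossNormal r q ⬝ᵥ crossNormal r q :=
    (cross_dotProduct_cross_self _ _).symm
  rw [Wc, h]
  exact Real.sq_sqrt (Finset.sum_nonneg fun i _ => mul_self_nonneg _)

theorem dot3_nc_div_Wc (x : Fin 3 → ℝ) (q : ℝ × ℝ) :
    dot3 x (nc r q) / Wc r q = x ⬝ᵥ crossNormal r q / (crossNormal r q ⬝ᵥ crossNormal r q) := by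
  rw [← Wc_sq, nc, dot3_eq_dotProduct, dotProduct_smul, smul_eq_mul, crossNormal]
  ring

theorem Δ0_eq :
    Δ0 r = fun q => pdu (pdu r) q ⬝ᵥ crossNormal r q / (crossNormal r q ⬝ᵥ crossNormal r q) :=
  funext fun q => dot3_nc_div_Wc _ q

theorem Δ1_eq :
    Δ1 r = fun q => pdv (pdu r) q ⬝ᵥ crossNormal r q / (crossNormal r q ⬝ᵥ crossNormal r q) :=
  funext fun q => dot3_nc_div_Wc _ q

theorem Δ2_eq :
    Δ2 r = fun q => pdv (pdv r) q ⬝ᵥ crossNormal r q / (crossNormal r q ⬝ᵥ crossNormal r q) :=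
  funext fun q => dot3_nc_div_Wc _ q

theorem pdu_Ec (hr : ContDiffAt ℝ 2 r p) : pdu (Ec r) p = 2 * (pdu r p ⬝ᵥ pdu (pdu r) p) := by
  have ha := differentiableAt_pdu hr le_rfl
  have h : pdu (Ec r) p = pdu (pdu r) p ⬝ᵥ pdu r p + pdu r p ⬝ᵥ pdu (pdu r) p :=
    fderiv_dotProduct_apply ha ha (1, 0)
  rw [h, dotProduct_comm]
  ring

theorem pdv_Ec (hr : ContDiffAt ℝ 2 r p) : pdv (Ec r) p = 2 * (pdu r p ⬝ᵥ pdv (pdu r) p) := by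
  have ha := differentiableAt_pdu hr le_rfl
  have h : pdv (Ec r) p = pdv (pdu r) p ⬝ᵥ pdu r p + pdu r p ⬝ᵥ pdv (pdu r) p :=
    fderiv_dotProduct_apply ha ha (0, 1)
  rw [h, dotProduct_comm]
  ring

theorem pdu_Fc (hr : ContDiffAt ℝ 2 r p) :
    pdu (Fc r) p = pdv r p ⬝ᵥ pdu (pdu r) p + pdu r p ⬝ᵥ pdv (pdu r) p := by
  have h : pdu (Fc r) p = pdu (pdu r) p ⬝ᵥ pdv r p + pdu r p ⬝ᵥ pdu (pdv r) p :=
    fderiv_dotProduct_apply (differentiableAt_pdu hr le_rfl) (differentiableAt_pdv hr le_rfl) (1, 0)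
  rw [h, dotProduct_comm, pdv_pdu_eq hr le_rfl]

theorem pdv_Fc (hr : ContDiffAt ℝ 2 r p) :
    pdv (Fc r) p = pdv r p ⬝ᵥ pdv (pdu r) p + pdu r p ⬝ᵥ pdv (pdv r) p := by
  have h : pdv (Fc r) p = pdv (pdu r) p ⬝ᵥ pdv r p + pdu r p ⬝ᵥ pdv (pdv r) p :=
    fderiv_dotProduct_apply (differentiableAt_pdu hr le_rfl) (differentiableAt_pdv hr le_rfl) (0, 1)
  rw [h, dotProduct_comm]

theorem pdu_Gc (hr : ContDiffAt ℝ 2 r p) : pdu (Gc r) p = 2 * (pdv r p ⬝ᵥ pdv (pdu r) p) := by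
  have hb := differentiableAt_pdv hr le_rfl
  have h : pdu (Gc r) p = pdu (pdv r) p ⬝ᵥ pdv r p + pdv r p ⬝ᵥ pdu (pdv r) p :=
    fderiv_dotProduct_apply hb hb (1, 0)
  rw [h, dotProduct_comm, ← pdv_pdu_eq hr le_rfl]
  ring

theorem pdv_Gc (hr : ContDiffAt ℝ 2 r p) : pdv (Gc r) p = 2 * (pdv r p ⬝ᵥ pdv (pdv r) p) := by
  have hb := differentiableAt_pdv hr le_rfl
  have h : pdv (Gc r) p = pdv (pdv r) p ⬝ᵥ pdv r p + pdv r p ⬝ᵥ pdv (pdv r) p :=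
    fderiv_dotProduct_apply hb hb (0, 1)
  rw [h, dotProduct_comm]
  ring

theorem Γ111_eq (hr : ContDiffAt ℝ 2 r p) :
    Γ111 r p = tangentialCoord (pdu r p) (pdv r p) (pdu (pdu r) p) := by
  rw [Γ111, pdu_Ec hr, pdu_Fc hr, pdv_Ec hr, div_mul_eq_div_div_swap, Wc_sq, tangentialCoord]
  simp only [Fc, Gc, dot3_eq_dotProduct, crossNormal]
  ring

theorem Γ211_eq (hr : ContDiffAt ℝ 2 r p) :
    Γ211 r p = tangentialCoord (pdv r p) (pdu r p) (pdu (pdu r) p) := by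
  rw [Γ211, pdu_Ec hr, pdu_Fc hr, pdv_Ec hr, div_mul_eq_div_div_swap, Wc_sq, tangentialCoord,
    cross_dotProduct_cross_swap]
  simp only [Ec, Fc, dot3_eq_dotProduct, crossNormal, dotProduct_comm (pdv r p) (pdu r p)]
  ring

theorem Γ112_eq (hr : ContDiffAt ℝ 2 r p) :
    Γ112 r p = tangentialCoord (pdu r p) (pdv r p) (pdv (pdu r) p) := by
  rw [Γ112, pdv_Ec hr, pdu_Gc hr, div_mul_eq_div_div_swap, Wc_sq, tangentialCoord]
  simp only [Fc, Gc, dot3_eq_dotProduct, crossNormal]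
  ring

theorem Γ212_eq (hr : ContDiffAt ℝ 2 r p) :
    Γ212 r p = tangentialCoord (pdv r p) (pdu r p) (pdv (pdu r) p) := by
  rw [Γ212, pdv_Ec hr, pdu_Gc hr, div_mul_eq_div_div_swap, Wc_sq, tangentialCoord,
    cross_dotProduct_cross_swap]
  simp only [Ec, Fc, dot3_eq_dotProduct, crossNormal, dotProduct_comm (pdv r p) (pdu r p)]
  ring

theorem Γ122_eq (hr : ContDiffAt ℝ 2 r p) :
    Γ122 r p = tangentialCoord (pdu r p) (pdv r p) (pdv (pdv r) p) := by
  rw [Γ122, pdv_Fc hr, pdu_Gc hr, pdv_Gc hr, div_mul_eq_div_div_swap, Wc_sq, tangentialCoord]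
  simp only [Fc, Gc, dot3_eq_dotProduct, crossNormal]
  ring

theorem Γ222_eq (hr : ContDiffAt ℝ 2 r p) :
    Γ222 r p = tangentialCoord (pdv r p) (pdu r p) (pdv (pdv r) p) := by
  rw [Γ222, pdv_Fc hr, pdu_Gc hr, pdv_Gc hr, div_mul_eq_div_div_swap, Wc_sq, tangentialCoord,
    cross_dotProduct_cross_swap]
  simp only [Ec, Fc, dot3_eq_dotProduct, crossNormal, dotProduct_comm (pdv r p) (pdu r p)]
  ring

theorem differentiableAt_crossNormal (hr : ContDiffAt ℝ 2 r p) :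
    DifferentiableAt ℝ (crossNormal r) p :=
  (differentiableAt_pdu hr le_rfl).crossProduct (differentiableAt_pdv hr le_rfl)

theorem pdu_crossNormal (hr : ContDiffAt ℝ 2 r p) :
    pdu (crossNormal r) p = pdu (pdu r) p ⨯₃ pdv r p + pdu r p ⨯₃ pdv (pdu r) p := by
  have h : pdu (crossNormal r) p = pdu (pdu r) p ⨯₃ pdv r p + pdu r p ⨯₃ pdu (pdv r) p :=
    fderiv_crossProduct_apply (differentiableAt_pdu hr le_rfl) (differentiableAt_pdv hr le_rfl)
      (1, 0)
  rw [h, pdv_pdu_eq hr le_rfl]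

theorem pdv_crossNormal (hr : ContDiffAt ℝ 2 r p) :
    pdv (crossNormal r) p = pdv (pdu r) p ⨯₃ pdv r p + pdu r p ⨯₃ pdv (pdv r) p :=
  fderiv_crossProduct_apply (differentiableAt_pdu hr le_rfl) (differentiableAt_pdv hr le_rfl)
    (0, 1)

theorem codazzi_mainardi_fst (hr : ContDiffAt ℝ 3 r p) (hν : crossNormal r p ≠ 0) :
    pdv (Δ0 r) p - pdu (Δ1 r) p +
      Γ222 r p * Δ0 r p - 2 * Γ212 r p * Δ1 r p + Γ211 r p * Δ2 r p = 0 := by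
  have hr2 : ContDiffAt ℝ 2 r p := hr.of_le (by norm_num)
  have hru : ContDiffAt ℝ 2 (pdu r) p := contDiffAt_pdu hr (by norm_num)
  have hΔ0 := fderiv_dotProduct_div_dotProduct_self_apply (differentiableAt_pdu hru le_rfl)
    (differentiableAt_crossNormal hr2) hν (0, 1)
  have hΔ1 := fderiv_dotProduct_div_dotProduct_self_apply (differentiableAt_pdv hru le_rfl)
    (differentiableAt_crossNormal hr2) hν (1, 0)
  rw [← Δ0_eq] at hΔ0
  rw [← Δ1_eq] at hΔ1
  simp only [fderiv_apply_one_zero, fderiv_apply_zero_one] at hΔ0 hΔ1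
  rw [hΔ0, hΔ1, Γ222_eq hr2, Γ212_eq hr2, Γ211_eq hr2, pdv_crossNormal hr2, pdu_crossNormal hr2,
    pdv_pdu_eq hru le_rfl]
  simp only [Δ0_eq, Δ1_eq, Δ2_eq]
  unfold crossNormal at hν ⊢
  rw [cross_dotProduct_cross_add_cross hν, cross_dotProduct_cross_add_cross hν]
  have hN : (pdu r p ⨯₃ pdv r p) ⬝ᵥ (pdu r p ⨯₃ pdv r p) ≠ 0 := by
    rwa [Ne, dotProduct_self_eq_zero]
  field_simp
  linear_combination codazzi_vector_identity_fst hν (pdu (pdu r) p) (pdv (pdu r) p) (pdv (pdv r) p)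

theorem codazzi_mainardi_snd (hr : ContDiffAt ℝ 3 r p) (hν : crossNormal r p ≠ 0) :
    pdu (Δ2 r) p - pdv (Δ1 r) p +
      Γ122 r p * Δ0 r p - 2 * Γ112 r p * Δ1 r p + Γ111 r p * Δ2 r p = 0 := by
  have hr2 : ContDiffAt ℝ 2 r p := hr.of_le (by norm_num)
  have hΔ2 := fderiv_dotProduct_div_dotProduct_self_apply
    (differentiableAt_pdv (contDiffAt_pdv hr (by norm_num)) le_rfl)
    (differentiableAt_crossNormal hr2) hν (1, 0)
  have hΔ1 := fderiv_dotProduct_div_dotProduct_self_apply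
    (differentiableAt_pdv (contDiffAt_pdu hr (by norm_num)) le_rfl)
    (differentiableAt_crossNormal hr2) hν (0, 1)
  rw [← Δ2_eq] at hΔ2
  rw [← Δ1_eq] at hΔ1
  simp only [fderiv_apply_one_zero, fderiv_apply_zero_one] at hΔ2 hΔ1
  rw [hΔ2, hΔ1, Γ122_eq hr2, Γ112_eq hr2, Γ111_eq hr2, pdv_crossNormal hr2, pdu_crossNormal hr2,
    pdv_pdv_pdu_eq hr le_rfl]
  simp only [Δ0_eq, Δ1_eq, Δ2_eq]
  unfold crossNormal at hν ⊢
  rw [cross_dotProduct_cross_add_cross hν, cross_dotProduct_cross_add_cross hν]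
  have hN : (pdu r p ⨯₃ pdv r p) ⬝ᵥ (pdu r p ⨯₃ pdv r p) ≠ 0 := by
    rwa [Ne, dotProduct_self_eq_zero]
  field_simp
  linear_combination codazzi_vector_identity_snd hν (pdu (pdu r) p) (pdv (pdu r) p) (pdv (pdv r) p)

end Surface

/-- Peterson's equations (the Codazzi–Mainardi equations) hold for every
smooth immersed parametrized surface `r : U → ℝ³`. -/
theorem peterson_codazzi_mainardi_equations
    (U : Set (ℝ × ℝ)) (hU : IsOpen U)
    (hr : ContDiffOn ℝ (⊤ : ℕ∞) r U)
    (hind : ∀ p ∈ U, LinearIndependent ℝ ![pdu r p, pdv r p]) :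
    ∀ p ∈ U,
      pdv (Δ0 r) p - pdu (Δ1 r) p +
          Γ222 r p * Δ0 r p - 2 * Γ212 r p * Δ1 r p + Γ211 r p * Δ2 r p = 0 ∧
      pdu (Δ2 r) p - pdv (Δ1 r) p +
          Γ122 r p * Δ0 r p - 2 * Γ112 r p * Δ1 r p + Γ111 r p * Δ2 r p = 0 := by
  intro p hp
  have hr3 : ContDiffAt ℝ 3 r p :=
    (hr.contDiffAt (hU.mem_nhds hp)).of_le (WithTop.coe_le_coe.2 le_top)
  have hν : crossNormal r p ≠ 0 := crossProduct_ne_zero_iff_linearIndependent.2 (hind p hp)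
  exact ⟨codazzi_mainardi_fst hr3 hν, codazzi_mainardi_snd hr3 hν⟩

end
end
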